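/- arXiv:2102.12230 — 6 statements merged into one kernel-verified Lean document; each statement's English description precedes it below -/
import Mathlib

section
/- Let (ξ_l)_{l≥0} be a sequence of independent, integrable real-valued random variables on a probability space, and let L be an ℕ-valued random variable, independent of the sequence, with probability mass function p satisfying p(l) > 0 for every l ≥ 0. Suppose there are real numbers (a_l)_{l≥0} and a real number a such that E[ξ_0] = a_0, E[ξ_l] = a_l − a_{l−1} for every l ≥ 1, and a_l → a as l → ∞. If Σ_{l≥0} E[ξ_l²]/p(l) < ∞, then the single-term estimator Z := ξ_L / p(L) is square-integrable, E[Z] = a, and E[Z²] = Σ_{l≥0} E[ξ_l²]/p(l); in particular Z is an unbiased estimator of a with finite variance. -/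
/-!
On the event `{L = l}` the estimator equals `ξ_l / p(l)`, and since `L` is independent of
`ξ_l` its integral over that event is `P(L = l) · E[ξ_l] / p(l) = E[ξ_l]`. Summing over the
countable partition `{L = l}` gives `E[Z] = ∑ E[ξ_l] = lim a_l` (the partial sums telescope to
`a_n`), and the same computation for `Z²` gives `E[Z²] = ∑ E[ξ_l²] / p(l)`, whose finiteness is
what makes `Z` square integrable in the first place.
-/

open MeasureTheory ProbabilityTheory Filter

theorem ProbabilityTheory.IndepFun.setIntegral_preimage_eq_mul {Ω β : Type*}
    [MeasurableSpace Ω] [MeasurableSpace β] {P : Measure Ω} {L : Ω → β} {Y : Ω → ℝ}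
    (hind : IndepFun L Y P) (hL : Measurable L) (hY : AEMeasurable Y P) {s : Set β}
    (hs : MeasurableSet s) :
    ∫ ω in L ⁻¹' s, Y ω ∂P = P.real (L ⁻¹' s) * ∫ ω, Y ω ∂P :=
  ((IndepFun_iff_Indep L Y P).1 hind).setIntegral_eq_mul (f := id) hL.comap_le hY ⟨s, hs, rfl⟩
    aestronglyMeasurable_id

theorem Finset.sum_range_succ_eq_of_increments {G : Type*} [AddCommGroup G] {f a : ℕ → G}
    (h0 : f 0 = a 0) (hinc : ∀ l, 1 ≤ l → f l = a l - a (l - 1)) (n : ℕ) :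
    ∑ l ∈ Finset.range (n + 1), f l = a n := by
  induction n with
  | zero => simpa using h0
  | succ n ih => rw [Finset.sum_range_succ, ih, hinc (n + 1) n.succ_pos, Nat.add_sub_cancel,
      add_sub_cancel]

theorem Set.iUnion_preimage_singleton_eq_univ {α β : Type*} (f : α → β) :
    ⋃ b, f ⁻¹' {b} = Set.univ := by
  rw [← Set.preimage_iUnion, Set.iUnion_of_singleton, Set.preimage_univ]

section RandomIndex

variable {Ω : Type*} [MeasurableSpace Ω] {P : Measure Ω} {L : Ω → ℕ} {Y : ℕ → Ω → ℝ}

theorem apply_index_ae_eq_restrict (hL : Measurable L) (l : ℕ) :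
    (fun ω => Y (L ω) ω) =ᵐ[P.restrict (L ⁻¹' {l})] Y l :=
  (ae_restrict_mem (hL (measurableSet_singleton l))).mono fun ω (hω : L ω = l) =>
    congrFun (congrArg Y hω) ω

theorem aestronglyMeasurable_apply_index (hL : Measurable L)
    (hY : ∀ l, AEStronglyMeasurable (Y l) P) :
    AEStronglyMeasurable (fun ω => Y (L ω) ω) P := by
  rw [← Measure.restrict_univ (μ := P), ← Set.iUnion_preimage_singleton_eq_univ L,
    aestronglyMeasurable_iUnion_iff]
  exact fun l => (hY l).restrict.congr (apply_index_ae_eq_restrict hL l).symm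

theorem setIntegral_apply_index (hL : Measurable L) (hind : ∀ l, IndepFun L (Y l) P)
    (hY : ∀ l, AEMeasurable (Y l) P) (l : ℕ) :
    ∫ ω in L ⁻¹' {l}, Y (L ω) ω ∂P = P.real (L ⁻¹' {l}) * ∫ ω, Y l ω ∂P := by
  rw [integral_congr_ae (apply_index_ae_eq_restrict hL l)]
  exact (hind l).setIntegral_preimage_eq_mul hL (hY l) (measurableSet_singleton l)

theorem integrable_apply_index_of_summable (hL : Measurable L) (hind : ∀ l, IndepFun L (Y l) P)
    (hY : ∀ l, Integrable (Y l) P)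
    (hsum : Summable fun l => P.real (L ⁻¹' {l}) * ∫ ω, ‖Y l ω‖ ∂P) :
    Integrable (fun ω => Y (L ω) ω) P := by
  rw [← integrableOn_univ, ← Set.iUnion_preimage_singleton_eq_univ L]
  refine integrableOn_iUnion_of_summable_integral_norm
    (fun l => ((hY l).integrableOn).congr_fun_ae (apply_index_ae_eq_restrict hL l).symm) ?_
  convert hsum using 2 with l
  exact setIntegral_apply_index (Y := fun l ω => ‖Y l ω‖) hL
    (fun l => (hind l).comp measurable_id measurable_norm) (fun l => (hY l).norm.aemeasurable) l

theorem hasSum_integral_apply_index (hL : Measurable L) (hind : ∀ l, IndepFun L (Y l) P)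
    (hY : ∀ l, AEMeasurable (Y l) P) (hint : Integrable (fun ω => Y (L ω) ω) P) :
    HasSum (fun l => P.real (L ⁻¹' {l}) * ∫ ω, Y l ω ∂P) (∫ ω, Y (L ω) ω ∂P) := by
  have h := hasSum_integral_iUnion (fun l => hL (measurableSet_singleton l))
    (pairwise_disjoint_fiber L)
    (by rw [Set.iUnion_preimage_singleton_eq_univ]; exact hint.integrableOn)
  rw [Set.iUnion_preimage_singleton_eq_univ, Measure.restrict_univ] at h
  simpa only [setIntegral_apply_index hL hind hY] using h

end RandomIndex

theorem single_term_estimator_unbiased_finite_variance_general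
    {Ω : Type*} [MeasurableSpace Ω] (P : Measure Ω) [IsProbabilityMeasure P]
    (ξ : ℕ → Ω → ℝ)
    (L : Ω → ℕ) (hLmeas : Measurable L)
    (p : ℕ → ℝ) (hp_pos : ∀ l, 0 < p l)
    (hLlaw : ∀ l, P {ω | L ω = l} = ENNReal.ofReal (p l))
    (hLindep : IndepFun L (fun ω => fun l => ξ l ω) P)
    (a : ℕ → ℝ) (alim : ℝ)
    (ha0 : ∫ ω, ξ 0 ω ∂P = a 0)
    (hainc : ∀ l : ℕ, 1 ≤ l → ∫ ω, ξ l ω ∂P = a l - a (l - 1))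
    (halim : Tendsto a atTop (nhds alim))
    (hξ2 : ∀ l, MemLp (ξ l) 2 P)
    (hsum : Summable (fun l => (∫ ω, (ξ l ω) ^ 2 ∂P) / p l)) :
    MemLp (fun ω => ξ (L ω) ω / p (L ω)) 2 P ∧
    ∫ ω, ξ (L ω) ω / p (L ω) ∂P = alim ∧
    ∫ ω, (ξ (L ω) ω / p (L ω)) ^ 2 ∂P = ∑' l, (∫ ω, (ξ l ω) ^ 2 ∂P) / p l := by
  have hlaw : ∀ l, P.real (L ⁻¹' {l}) = p l := fun l => by
    rw [measureReal_def, ← ENNReal.toReal_ofReal (hp_pos l).le, ← hLlaw l]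
    rfl
  have hind : ∀ (g : ℝ → ℝ), Measurable g → ∀ l, IndepFun L (fun ω => g (ξ l ω / p l)) P :=
    fun g hg l => hLindep.comp (φ := id) (ψ := fun x : ℕ → ℝ => g (x l / p l)) measurable_id
      (by fun_prop)
  have hmeas : ∀ l, AEStronglyMeasurable (fun ω => ξ l ω / p l) P :=
    fun l => by have := (hξ2 l).1; fun_prop
  have hsecond : ∀ l, p l * ∫ ω, (ξ l ω / p l) ^ 2 ∂P = (∫ ω, ξ l ω ^ 2 ∂P) / p l := fun l => by
    simp_rw [div_pow, integral_div]
    field_simp [(hp_pos l).ne']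
  have hsq : Integrable (fun ω => (ξ (L ω) ω / p (L ω)) ^ 2) P := by
    refine integrable_apply_index_of_summable (Y := fun l ω => (ξ l ω / p l) ^ 2) hLmeas
      (hind _ (measurable_id.pow_const 2)) (fun l => ?_) ?_
    · simpa only [div_pow] using (hξ2 l).integrable_sq.div_const (p l ^ 2)
    · simpa only [hlaw, norm_pow, Real.norm_eq_abs, sq_abs, hsecond] using hsum
  have hZ : MemLp (fun ω => ξ (L ω) ω / p (L ω)) 2 P :=
    (memLp_two_iff_integrable_sq (aestronglyMeasurable_apply_index hLmeas hmeas)).2 hsq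
  refine ⟨hZ, ?_, ?_⟩
  · have h := hasSum_integral_apply_index (Y := fun l ω => ξ l ω / p l) hLmeas
      (hind id measurable_id) (fun l => (hmeas l).aemeasurable) (hZ.integrable one_le_two)
    simp only [hlaw, integral_div, mul_div_cancel₀ _ (hp_pos _).ne'] at h
    refine tendsto_nhds_unique ?_ halim
    simpa only [Function.comp_def, Finset.sum_range_succ_eq_of_increments ha0 hainc] using
      h.tendsto_sum_nat.comp (tendsto_add_atTop_nat 1)
  · have h := hasSum_integral_apply_index (Y := fun l ω => (ξ l ω / p l) ^ 2) hLmeas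
      (hind _ (measurable_id.pow_const 2)) (fun l => ((hmeas l).pow 2).aemeasurable) hsq
    simp only [hlaw, hsecond] at h
    exact h.tsum_eq.symm

/-- the single-term randomized estimator `Z = ξ_L / p(L)` is
square-integrable, unbiased for `a = lim a_l`, and its second moment equals
`∑_l E[ξ_l²]/p(l)`. -/
theorem single_term_estimator_unbiased_finite_variance
    {Ω : Type*} [MeasurableSpace Ω] (P : Measure Ω) [IsProbabilityMeasure P]
    (ξ : ℕ → Ω → ℝ) (hξmeas : ∀ l, Measurable (ξ l))
    (hξint : ∀ l, Integrable (ξ l) P)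
    (hξindep : iIndepFun ξ P)
    (L : Ω → ℕ) (hLmeas : Measurable L)
    (p : ℕ → ℝ) (hp_pos : ∀ l, 0 < p l) (hp_sum : ∑' l, p l = 1)
    (hLlaw : ∀ l, P {ω | L ω = l} = ENNReal.ofReal (p l))
    (hLindep : IndepFun L (fun ω => fun l => ξ l ω) P)
    (a : ℕ → ℝ) (alim : ℝ)
    (ha0 : ∫ ω, ξ 0 ω ∂P = a 0)
    (hainc : ∀ l : ℕ, 1 ≤ l → ∫ ω, ξ l ω ∂P = a l - a (l - 1))
    (halim : Tendsto a atTop (nhds alim))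
    (hξ2 : ∀ l, MemLp (ξ l) 2 P)
    (hsum : Summable (fun l => (∫ ω, (ξ l ω) ^ 2 ∂P) / p l)) :
    MemLp (fun ω => ξ (L ω) ω / p (L ω)) 2 P ∧
    ∫ ω, ξ (L ω) ω / p (L ω) ∂P = alim ∧
    ∫ ω, (ξ (L ω) ω / p (L ω)) ^ 2 ∂P = ∑' l, (∫ ω, (ξ l ω) ^ 2 ∂P) / p l :=
  single_term_estimator_unbiased_finite_variance_general P ξ L hLmeas p hp_pos hLlaw hLindep a alim
    ha0 hainc halim hξ2 hsum
end

section
/- Let K be a Markov kernel on a measurable space (X, 𝒳) and π a probability measure on (X, 𝒳) that is invariant for K (i.e. ∫ K(x, A) π(dx) = π(A) for all A ∈ 𝒳). Assume there exist C ∈ (0,∞) and ρ ∈ (0,1) such that |K^n(x, A) − π(A)| ≤ C ρ^n for every n ≥ 1, every x ∈ X and every A ∈ 𝒳. Then for every bounded measurable φ : X → ℝ, the function φ̂(x) := Σ_{n=0}^∞ (K^n(φ)(x) − π(φ)) satisfies the Poisson equation φ̂(x) − K(φ̂)(x) = φ(x) − π(φ) for every x ∈ X. -/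
/-!
The terms `gₙ = Kⁿφ − π(φ)` satisfy `K gₙ = gₙ₊₁`, so `φ̂ − Kφ̂` telescopes to `g₀ = φ − π(φ)`
as soon as the series defining `φ̂` may be integrated termwise against `K(x, ·)`. That follows
from a geometric bound `|gₙ| ≤ 2M max(1, C) ρⁿ`, where `M` bounds `|φ|`: by the layer-cake
formula, the integrals of a function with values in `[-M, M]` against two probability measures
differ by at most `2M` times the largest difference of the measures of a set.
-/

open MeasureTheory ProbabilityTheory

/-- Iterates of a Markov kernel: `iterKernel K 0 = id` (Dirac), and
`iterKernel K (n+1)` first runs `n` steps and then one more step of `K`. -/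
noncomputable def iterKernel {X : Type*} [MeasurableSpace X]
    (K : Kernel X X) : ℕ → Kernel X X
  | 0 => Kernel.id
  | n + 1 => K.comp (iterKernel K n)

open Set

section TotalVariation

variable {X : Type*} [MeasurableSpace X] {μ ν : Measure X} {ε : ℝ}

lemma abs_integral_sub_le_of_nonneg_of_le [IsFiniteMeasure μ] [IsFiniteMeasure ν]
    (hdist : ∀ A, MeasurableSet A → |μ.real A - ν.real A| ≤ ε)
    {g : X → ℝ} (hg : Measurable g) {B : ℝ} (hB : 0 ≤ B)
    (hg0 : ∀ x, 0 ≤ g x) (hgB : ∀ x, g x ≤ B) :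
    |∫ x, g x ∂μ - ∫ x, g x ∂ν| ≤ B * ε := by
  have hlayer (m : Measure X) [IsFiniteMeasure m] :
      ∫ x, g x ∂m = ∫ t in Ioc 0 B, m.real {x | t ≤ g x} :=
    (Integrable.of_bound hg.aestronglyMeasurable B
        (ae_of_all _ fun x => by simpa [abs_of_nonneg (hg0 x)] using hgB x)
      ).integral_eq_integral_Ioc_meas_le (ae_of_all _ hg0) (ae_of_all _ hgB)
  have hlevel (m : Measure X) [IsFiniteMeasure m] :
      IntegrableOn (fun t => m.real {x | t ≤ g x}) (Ioc 0 B) := by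
    have hanti : Antitone fun t => m.real {x | t ≤ g x} := fun s t hst =>
      measureReal_mono fun x (hx : t ≤ g x) => (hst.trans hx : s ≤ g x)
    refine IntegrableOn.of_bound measure_Ioc_lt_top hanti.measurable.aestronglyMeasurable
      (m.real univ) (ae_of_all _ fun t => ?_)
    rw [Real.norm_of_nonneg measureReal_nonneg]
    exact measureReal_mono (subset_univ _)
  calc |∫ x, g x ∂μ - ∫ x, g x ∂ν|
      = ‖∫ t in Ioc 0 B, (μ.real {x | t ≤ g x} - ν.real {x | t ≤ g x})‖ := by
        rw [hlayer μ, hlayer ν, integral_sub (hlevel μ) (hlevel ν), Real.norm_eq_abs]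
    _ ≤ ε * volume.real (Ioc 0 B) :=
        norm_setIntegral_le_of_norm_le_const measure_Ioc_lt_top fun t _ =>
          hdist _ (measurableSet_le measurable_const hg)
    _ = B * ε := by rw [Real.volume_real_Ioc_of_le hB, sub_zero, mul_comm]

lemma abs_integral_sub_le_of_abs_le [IsProbabilityMeasure μ] [IsProbabilityMeasure ν]
    (hdist : ∀ A, MeasurableSet A → |μ.real A - ν.real A| ≤ ε)
    {f : X → ℝ} (hf : Measurable f) {M : ℝ} (hM : ∀ x, |f x| ≤ M) :
    |∫ x, f x ∂μ - ∫ x, f x ∂ν| ≤ 2 * M * ε := by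
  obtain ⟨x₀⟩ := nonempty_of_isProbabilityMeasure μ
  have hshift (m : Measure X) [IsProbabilityMeasure m] :
      ∫ x, f x + M ∂m = ∫ x, f x ∂m + M := by
    rw [integral_add (Integrable.of_bound hf.aestronglyMeasurable M (ae_of_all _ hM))
      (integrable_const M), integral_const]
    simp
  have h := abs_integral_sub_le_of_nonneg_of_le hdist (hf.add_const M) (B := 2 * M)
    (by linarith [(abs_nonneg _).trans (hM x₀)])
    (fun x => by linarith [(abs_le.1 (hM x)).1]) (fun x => by linarith [(abs_le.1 (hM x)).2])
  rwa [hshift μ, hshift ν, add_sub_add_right_eq_sub] at h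

end TotalVariation

section Telescoping

variable {X : Type*} [MeasurableSpace X]

lemma tsum_sub_integral_tsum_eq_of_integral_eq_succ (μ : Measure X) [IsFiniteMeasure μ]
    {g : ℕ → X → ℝ} {b : ℕ → ℝ} (hg : ∀ n, Measurable (g n)) (hgb : ∀ n y, |g n y| ≤ b n)
    (hb : Summable b) {x : X} (hstep : ∀ n, ∫ y, g n y ∂μ = g (n + 1) x) :
    ∑' n, g n x - ∫ y, ∑' n, g n y ∂μ = g 0 x := by
  have hint (n : ℕ) : Integrable (g n) μ :=
    Integrable.of_bound (hg n).aestronglyMeasurable (b n) (ae_of_all _ (hgb n))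
  have hnorm : Summable fun n => ∫ y, ‖g n y‖ ∂μ :=
    (hb.mul_right (μ.real univ)).of_nonneg_of_le (fun n => integral_nonneg fun _ => norm_nonneg _)
      fun n => (le_abs_self _).trans
        (norm_integral_le_of_norm_le_const (f := fun y => ‖g n y‖)
          (ae_of_all _ fun y => by simpa using hgb n y))
  rw [← integral_tsum_of_summable_integral_norm hint hnorm, tsum_congr hstep,
    (hb.of_norm_bounded fun n => hgb n x).tsum_eq_zero_add]
  ring

end Telescoping

section IterKernel

variable {X : Type*} [MeasurableSpace X] (K : Kernel X X)

lemma iterKernel_eq_pow (n : ℕ) : iterKernel K n = K ^ n := by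
  induction n with
  | zero => rfl
  | succ n ih => rw [iterKernel, ih, pow_succ']; rfl

lemma iterKernel_succ_eq_comp (n : ℕ) : iterKernel K (n + 1) = iterKernel K n ∘ₖ K := by
  rw [iterKernel_eq_pow, iterKernel_eq_pow, pow_succ]; rfl

instance [IsMarkovKernel K] (n : ℕ) : IsMarkovKernel (iterKernel K n) := by
  induction n with
  | zero => rw [iterKernel]; infer_instance
  | succ n ih => rw [iterKernel]; infer_instance

lemma integral_iterKernel_succ [IsMarkovKernel K] {f : X → ℝ} (hf : Measurable f) {M : ℝ}
    (hM : ∀ x, |f x| ≤ M) (n : ℕ) (x : X) :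
    ∫ y, f y ∂iterKernel K (n + 1) x = ∫ y, ∫ z, f z ∂iterKernel K n y ∂K x := by
  rw [iterKernel_succ_eq_comp]
  exact Kernel.integral_comp (Integrable.of_bound hf.aestronglyMeasurable M (ae_of_all _ hM))

lemma abs_iterKernel_real_sub_le (π : Measure X) [IsProbabilityMeasure π]
    {C ρ : ℝ} (hρ : 0 ≤ ρ)
    (hconv : ∀ n : ℕ, 1 ≤ n → ∀ x : X, ∀ A : Set X, MeasurableSet A →
      |(iterKernel K n x).real A - π.real A| ≤ C * ρ ^ n)
    (n : ℕ) (x : X) (A : Set X) (hA : MeasurableSet A) :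
    |(iterKernel K n x).real A - π.real A| ≤ max 1 C * ρ ^ n := by
  rcases Nat.eq_zero_or_pos n with rfl | hn
  · rw [pow_zero, mul_one]
    rw [iterKernel, Kernel.id_apply]
    exact (abs_sub_le_of_nonneg_of_le measureReal_nonneg measureReal_le_one measureReal_nonneg
      measureReal_le_one).trans (le_max_left 1 C)
  · exact (hconv n hn x A hA).trans
      (mul_le_mul_of_nonneg_right (le_max_right 1 C) (pow_nonneg hρ n))

end IterKernel

theorem poisson_equation_solution_general
    {X : Type*} [MeasurableSpace X]
    (K : Kernel X X) [IsMarkovKernel K]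
    (π : Measure X) [IsProbabilityMeasure π]
    (C ρ : ℝ) (hρ0 : 0 < ρ) (hρ1 : ρ < 1)
    (hconv : ∀ n : ℕ, 1 ≤ n → ∀ x : X, ∀ A : Set X, MeasurableSet A →
      |(iterKernel K n x A).toReal - (π A).toReal| ≤ C * ρ ^ n)
    (φ : X → ℝ) (hφmeas : Measurable φ) (hφbdd : ∃ M : ℝ, ∀ x, |φ x| ≤ M) :
    ∀ x : X,
      (∑' n : ℕ, ((∫ y, φ y ∂(iterKernel K n x)) - ∫ y, φ y ∂π)) -
        (∫ y, (∑' n : ℕ, ((∫ z, φ z ∂(iterKernel K n y)) - ∫ z, φ z ∂π)) ∂(K x)) =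
      φ x - ∫ y, φ y ∂π := by
  obtain ⟨M, hM⟩ := hφbdd
  intro x
  have hmeas (n : ℕ) : Measurable fun y => ∫ z, φ z ∂iterKernel K n y :=
    (hφmeas.stronglyMeasurable.integral_kernel (κ := iterKernel K n)).measurable
  have hint (n : ℕ) : Integrable (fun y => ∫ z, φ z ∂iterKernel K n y) (K x) :=
    Integrable.of_bound (hmeas n).aestronglyMeasurable M (ae_of_all _ fun y =>
      (norm_integral_le_of_norm_le_const (ae_of_all _ hM)).trans (by simp))
  refine (tsum_sub_integral_tsum_eq_of_integral_eq_succ (K x)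
    (b := fun n => 2 * M * (max 1 C * ρ ^ n)) (fun n => (hmeas n).sub_const _)
    (fun n y => abs_integral_sub_le_of_abs_le
      (abs_iterKernel_real_sub_le K π hρ0.le hconv n y) hφmeas hM)
    (((summable_geometric_of_lt_one hρ0.le hρ1).mul_left _).mul_left _)
    fun n => ?_).trans ?_
  · rw [integral_sub (hint n) (integrable_const _), integral_const,
      integral_iterKernel_succ K hφmeas hM]
    simp
  · rw [iterKernel, Kernel.id_apply, integral_dirac' φ x hφmeas.stronglyMeasurable]

/-- under uniform geometric ergodicity towards the invariant
probability measure `π`, the function `φ̂(x) = ∑_n (K^n(φ)(x) − π(φ))` solves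
the Poisson equation `φ̂ − K(φ̂) = φ − π(φ)`. -/
theorem poisson_equation_solution
    {X : Type*} [MeasurableSpace X]
    (K : Kernel X X) [IsMarkovKernel K]
    (π : Measure X) [IsProbabilityMeasure π]
    (hinv : Kernel.Invariant K π)
    (C ρ : ℝ) (hC : 0 < C) (hρ0 : 0 < ρ) (hρ1 : ρ < 1)
    (hconv : ∀ n : ℕ, 1 ≤ n → ∀ x : X, ∀ A : Set X, MeasurableSet A →
      |(iterKernel K n x A).toReal - (π A).toReal| ≤ C * ρ ^ n)
    (φ : X → ℝ) (hφmeas : Measurable φ) (hφbdd : ∃ M : ℝ, ∀ x, |φ x| ≤ M) :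
    ∀ x : X,
      (∑' n : ℕ, ((∫ y, φ y ∂(iterKernel K n x)) - ∫ y, φ y ∂π)) -
        (∫ y, (∑' n : ℕ, ((∫ z, φ z ∂(iterKernel K n y)) - ∫ z, φ z ∂π)) ∂(K x)) =
      φ x - ∫ y, φ y ∂π :=
  poisson_equation_solution_general K π C ρ hρ0 hρ1 hconv φ hφmeas hφbdd
end

section
/- Let X be a standard Borel space (e.g. a Borel subset of ℝ^d with its Borel σ-algebra), λ a σ-finite measure on X, and q₁, q₂, q₃, q₄ : X → [0,∞) measurable probability densities with respect to λ (i.e. ∫ q_i dλ = 1 for each i). Set S := ∫_X min{q₁(u), q₂(u), q₃(u), q₄(u)} λ(du). Then there exists a probability measure ν on X⁴ such that for each i ∈ {1,2,3,4} the i-th coordinate marginal of ν has density q_i with respect to λ, and ν({(x₁,x₂,x₃,x₄) ∈ X⁴ : x₁ = x₂ = x₃ = x₄}) = S. -/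
/-!
Put the common part `min_i q i` of the densities on the diagonal and couple the residuals
`q i - min_j q j`, which all have mass `1 - S`, independently, normalised by `(1 - S) ^ (n - 1)`
for `n` marginals so that each marginal of the independent part is exactly the residual. At
every point some residual density vanishes, so the independent part does not charge the
diagonal, and the diagonal receives exactly the mass `S` of the common part.
-/

open Set
open scoped ENNReal

namespace MeasureTheory

namespace Measure

variable {X ι : Type*} [MeasurableSpace X]

theorem map_eval_map_const (m : Measure X) (i : ι) :
    (m.map (Function.const ι)).map (Function.eval i) = m := by
  rw [map_map (measurable_pi_apply i) (by fun_prop)]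
  exact map_id

theorem map_const_apply_of_forall_mem (m : Measure X) {s : Set (ι → X)}
    (hs : ∀ x, Function.const ι x ∈ s) :
    m.map (Function.const ι) s = m univ := by
  have hconst : Measurable (Function.const ι : X → ι → X) := by fun_prop
  refine le_antisymm ?_ ?_
  · calc m.map (Function.const ι) s
        ≤ m.map (Function.const ι) univ := measure_mono (subset_univ s)
      _ = m univ := by rw [map_apply hconst .univ, preimage_univ]
  · calc m univ = m (Function.const ι ⁻¹' s) := by rw [eq_univ_of_forall (s := _ ⁻¹' s) hs]
      _ ≤ m.map (Function.const ι) s := le_map_apply hconst.aemeasurable s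

variable [Fintype ι]

theorem map_eval_smul_pi_of_measure_univ_eq {r : ι → Measure X} [∀ i, IsFiniteMeasure (r i)]
    {t : ℝ≥0∞} (hr : ∀ i, r i univ = t) (i : ι) :
    ((t ^ (Fintype.card ι - 1))⁻¹ • Measure.pi r).map (Function.eval i) = r i := by
  classical
  rw [Measure.map_smul, pi_map_eval, Finset.prod_congr rfl fun j _ => hr j, Finset.prod_const,
    Finset.card_erase_of_mem (Finset.mem_univ i), Finset.card_univ, smul_smul]
  rcases eq_or_ne t 0 with rfl | ht
  · simp [measure_univ_eq_zero.1 (hr i)]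
  · have ht_top : t ≠ ∞ := hr i ▸ measure_ne_top _ _
    rw [ENNReal.inv_mul_cancel (pow_ne_zero _ ht) (ENNReal.pow_ne_top ht_top), one_smul]

theorem pi_setOf_forall_eq_eq_zero {r : ι → Measure X} [∀ i, SigmaFinite (r i)]
    {A : ι → Set X} (hA : ∀ i, r i (A i) = 0) (hcover : ∀ x, ∃ i, x ∈ A i) (i₀ : ι) :
    Measure.pi r {f | ∀ i, f i = f i₀} = 0 := by
  refine measure_mono_null (fun f hf => ?_)
    (measure_iUnion_null fun i => pi_eval_preimage_null r (hA i))
  obtain ⟨i, hi⟩ := hcover (f i₀)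
  exact mem_iUnion.2 ⟨i, by rwa [mem_preimage, Function.eval, hf i]⟩

end Measure

section WithDensity

variable {X : Type*} [MeasurableSpace X] (μ : Measure X)

theorem withDensity_eq_withDensity_add_withDensity_sub {f g : X → ℝ≥0∞} (hf : Measurable f)
    (hfg : f ≤ g) : μ.withDensity g = μ.withDensity f + μ.withDensity (g - f) := by
  rw [← withDensity_add_left hf, add_tsub_cancel_of_le hfg]

theorem withDensity_setOf_eq_zero {f : X → ℝ≥0∞} (hf : Measurable f) :
    μ.withDensity f {x | f x = 0} = 0 :=
  (withDensity_apply_eq_zero hf).2 (measure_mono_null (fun _ hx => hx.1 hx.2) measure_empty)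

end WithDensity

section MaximalCoupling

variable {X ι : Type*}

noncomputable def minDensity (q : ι → X → ℝ≥0∞) : X → ℝ≥0∞ := fun u => ⨅ i, q i u

theorem minDensity_le (q : ι → X → ℝ≥0∞) (i : ι) : minDensity q ≤ q i :=
  fun u => iInf_le (fun j => q j u) i

variable [MeasurableSpace X]

theorem measurable_minDensity [Countable ι] {q : ι → X → ℝ≥0∞} (hq : ∀ i, Measurable (q i)) :
    Measurable (minDensity q) :=
  .iInf hq

variable [Fintype ι]

/-- When `∫⁻ minDensity q = 1` the normalising constant is `∞`, but then every residual measure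
is `0` and `∞ • 0 = 0`. -/
noncomputable def maximalCoupling (μ : Measure X) (q : ι → X → ℝ≥0∞) : Measure (ι → X) :=
  (μ.withDensity (minDensity q)).map (Function.const ι) +
    ((1 - ∫⁻ u, minDensity q u ∂μ) ^ (Fintype.card ι - 1))⁻¹ •
      Measure.pi fun i => μ.withDensity (q i - minDensity q)

variable {μ : Measure X} {q : ι → X → ℝ≥0∞} (hq : ∀ i, Measurable (q i))
  (hq_one : ∀ i, ∫⁻ u, q i u ∂μ = 1)
include hq hq_one

theorem withDensity_sub_minDensity_apply_univ (i : ι) :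
    μ.withDensity (q i - minDensity q) univ = 1 - ∫⁻ u, minDensity q u ∂μ := by
  have hS : ∫⁻ u, minDensity q u ∂μ ≠ ∞ :=
    ne_top_of_le_ne_top (hq_one i ▸ ENNReal.one_ne_top) (lintegral_mono (minDensity_le q i))
  rw [withDensity_apply _ .univ, setLIntegral_univ, Pi.sub_def,
    lintegral_sub (measurable_minDensity hq) hS (.of_forall (minDensity_le q i)), hq_one i]

theorem isFiniteMeasure_withDensity_sub_minDensity (i : ι) :
    IsFiniteMeasure (μ.withDensity (q i - minDensity q)) := by
  constructor
  rw [withDensity_sub_minDensity_apply_univ hq hq_one i]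
  exact tsub_le_self.trans_lt ENNReal.one_lt_top

theorem map_eval_maximalCoupling (i : ι) :
    (maximalCoupling μ q).map (Function.eval i) = μ.withDensity (q i) := by
  have := isFiniteMeasure_withDensity_sub_minDensity hq hq_one
  rw [maximalCoupling, Measure.map_add _ _ (measurable_pi_apply i), Measure.map_eval_map_const,
    Measure.map_eval_smul_pi_of_measure_univ_eq (withDensity_sub_minDensity_apply_univ hq hq_one),
    ← withDensity_eq_withDensity_add_withDensity_sub μ (measurable_minDensity hq)
      (minDensity_le q i)]

theorem maximalCoupling_setOf_forall_eq (i₀ : ι) :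
    maximalCoupling μ q {f | ∀ i, f i = f i₀} = ∫⁻ u, minDensity q u ∂μ := by
  have := isFiniteMeasure_withDensity_sub_minDensity hq hq_one
  have hcover (x : X) : ∃ i, x ∈ {x | (q i - minDensity q) x = 0} := by
    have : Nonempty ι := ⟨i₀⟩
    obtain ⟨i, hi⟩ := Finite.exists_min fun i => q i x
    exact ⟨i, tsub_eq_zero_of_le (le_iInf hi)⟩
  have hresidual : Measure.pi (fun i => μ.withDensity (q i - minDensity q))
      {f | ∀ i, f i = f i₀} = 0 :=
    Measure.pi_setOf_forall_eq_eq_zero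
      (fun i => withDensity_setOf_eq_zero μ ((hq i).sub (measurable_minDensity hq))) hcover i₀
  rw [maximalCoupling, Measure.add_apply, Measure.smul_apply, hresidual, smul_zero, add_zero,
    Measure.map_const_apply_of_forall_mem (s := {f | ∀ i, f i = f i₀}) _ fun _ _ => rfl,
    withDensity_apply _ .univ, setLIntegral_univ]

theorem isProbabilityMeasure_maximalCoupling [Nonempty ι] :
    IsProbabilityMeasure (maximalCoupling μ q) := by
  obtain ⟨i⟩ := ‹Nonempty ι›
  constructor
  rw [← preimage_univ (f := Function.eval i), ← Measure.map_apply (measurable_pi_apply i) .univ,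
    map_eval_maximalCoupling hq hq_one, withDensity_apply _ .univ, setLIntegral_univ, hq_one]

end MaximalCoupling

end MeasureTheory

open MeasureTheory

theorem four_marginal_maximal_coupling_exists_general
    {X : Type*} [MeasurableSpace X]
    (lam : Measure X)
    (q : Fin 4 → X → ENNReal) (hqmeas : ∀ i, Measurable (q i))
    (hqprob : ∀ i, ∫⁻ u, q i u ∂lam = 1) :
    ∃ ν : Measure (Fin 4 → X), IsProbabilityMeasure ν ∧
      (∀ i : Fin 4, ν.map (fun f => f i) = lam.withDensity (q i)) ∧
      ν {f : Fin 4 → X | ∀ i : Fin 4, f i = f 0} =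
        ∫⁻ u, ⨅ i : Fin 4, q i u ∂lam :=
  ⟨maximalCoupling lam q, isProbabilityMeasure_maximalCoupling hqmeas hqprob,
    map_eval_maximalCoupling hqmeas hqprob, maximalCoupling_setOf_forall_eq hqmeas hqprob 0⟩

/-- existence of a four-marginal maximal coupling: given four
probability densities `q i` with respect to a σ-finite measure `lam` on a
standard Borel space, there is a coupling `ν` on `X⁴` with these marginals
giving the diagonal exactly the mass
`S = ∫ min_i q_i dlam = ∫ ⨅ i, q i dlam`. -/
theorem four_marginal_maximal_coupling_exists
    {X : Type*} [MeasurableSpace X] [StandardBorelSpace X] [Nonempty X]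
    (lam : Measure X) [SigmaFinite lam]
    (q : Fin 4 → X → ENNReal) (hqmeas : ∀ i, Measurable (q i))
    (hqprob : ∀ i, ∫⁻ u, q i u ∂lam = 1) :
    ∃ ν : Measure (Fin 4 → X), IsProbabilityMeasure ν ∧
      (∀ i : Fin 4, ν.map (fun f => f i) = lam.withDensity (q i)) ∧
      ν {f : Fin 4 → X | ∀ i : Fin 4, f i = f 0} =
        ∫⁻ u, ⨅ i : Fin 4, q i u ∂lam :=
  four_marginal_maximal_coupling_exists_general lam q hqmeas hqprob
end

section
/- Let X be a standard Borel space (e.g. a Borel subset of ℝ^d with its Borel σ-algebra), λ a σ-finite measure on X, and q₁, q₂, q₃, q₄ : X → [0,∞) measurable probability densities with respect to λ. Then for every probability measure ν on X⁴ whose i-th coordinate marginal has density q_i with respect to λ for each i ∈ {1,2,3,4}, one has ν({(x₁,x₂,x₃,x₄) ∈ X⁴ : x₁ = x₂ = x₃ = x₄}) ≤ ∫_X min{q₁(u), q₂(u), q₃(u), q₄(u)} λ(du). -/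
open MeasureTheory

/-- maximality bound for four-marginal couplings: any coupling
`ν` on `X⁴` of four probability measures with densities `q i` with respect to a
σ-finite measure `lam` on a standard Borel space assigns the diagonal at most
`∫ min_i q_i dlam = ∫ ⨅ i, q i dlam`. -/
theorem four_marginal_coupling_diagonal_bound
    {X : Type*} [MeasurableSpace X] [StandardBorelSpace X] [Nonempty X]
    (lam : Measure X) [SigmaFinite lam]
    (q : Fin 4 → X → ENNReal) (hqmeas : ∀ i, Measurable (q i))
    (hqprob : ∀ i, ∫⁻ u, q i u ∂lam = 1)
    (ν : Measure (Fin 4 → X)) [IsProbabilityMeasure ν]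
    (hmarg : ∀ i : Fin 4, ν.map (fun f => f i) = lam.withDensity (q i)) :
    ν {f : Fin 4 → X | ∀ i : Fin 4, f i = f 0} ≤
      ∫⁻ u, ⨅ i : Fin 4, q i u ∂lam := by
  letI := upgradeStandardBorel X
  set D : Set (Fin 4 → X) := {f : Fin 4 → X | ∀ i : Fin 4, f i = f 0} with hD
  have hDmeas : MeasurableSet D := by
    have hEq : D = ⋂ i : Fin 4, {f : Fin 4 → X | f i = f 0} := by
      ext f; simp [hD]
    rw [hEq]
    exact MeasurableSet.iInter fun i =>
      MeasureTheory.StronglyMeasurable.measurableSet_eq_fun ((measurable_pi_apply i).stronglyMeasurable)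
        ((measurable_pi_apply 0).stronglyMeasurable)
  set μ : Measure X := (ν.restrict D).map (fun f => f 0) with hμ
  have hμapp : ∀ A : Set X, MeasurableSet A →
      μ A = ν ((fun f : Fin 4 → X => f 0) ⁻¹' A ∩ D) := by
    intro A hA
    rw [hμ, Measure.map_apply (measurable_pi_apply 0) hA,
      Measure.restrict_apply ((measurable_pi_apply 0) hA)]
  have hμle : ∀ i : Fin 4, μ ≤ lam.withDensity (q i) := by
    intro i
    rw [← hmarg i]
    refine Measure.le_iff.2 fun A hA => ?_
    rw [hμapp A hA, Measure.map_apply (measurable_pi_apply i) hA]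
    refine measure_mono ?_
    rintro f ⟨hf0, hfD⟩
    simpa [Set.mem_preimage, hfD i] using hf0
  have hνD : ν D = μ Set.univ := by
    rw [hμapp Set.univ MeasurableSet.univ]
    simp
  have hfin : IsFiniteMeasure μ := by
    constructor
    rw [← hνD]
    exact (measure_lt_top ν D)
  have hac : μ ≪ lam :=
    (Measure.absolutelyContinuous_of_le (hμle 0)).trans
      (withDensity_absolutelyContinuous lam (q 0))
  have hrn : lam.withDensity (μ.rnDeriv lam) = μ :=
    Measure.withDensity_rnDeriv_eq μ lam hac
  have hle_ae : ∀ i : Fin 4, μ.rnDeriv lam ≤ᵐ[lam] q i := by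
    intro i
    refine ae_le_of_forall_setLIntegral_le_of_sigmaFinite
      (Measure.measurable_rnDeriv μ lam) fun s hs _ => ?_
    have h1 : ∫⁻ x in s, μ.rnDeriv lam x ∂lam = μ s := by
      rw [← withDensity_apply _ hs, hrn]
    have h2 : ∫⁻ x in s, q i x ∂lam = lam.withDensity (q i) s :=
      (withDensity_apply _ hs).symm
    rw [h1, h2]
    exact hμle i s
  have hle_inf : μ.rnDeriv lam ≤ᵐ[lam] fun u => ⨅ i : Fin 4, q i u := by
    have := ae_all_iff.2 hle_ae
    filter_upwards [this] with u hu
    exact le_iInf hu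
  calc ν D = μ Set.univ := hνD
    _ = ∫⁻ u, μ.rnDeriv lam u ∂lam := by
        rw [← setLIntegral_univ, ← withDensity_apply _ MeasurableSet.univ, hrn]
    _ ≤ ∫⁻ u, ⨅ i : Fin 4, q i u ∂lam := lintegral_mono_ae hle_inf
end

section
/- Let (X, 𝒳) be a measurable space, φ : X → ℝ bounded measurable, and (X_n)_{n≥0}, (W_n)_{n≥0} two sequences of X-valued random elements on a common probability space such that: (i) X_n has the same law as W_{n+1} for every n ≥ 0; (ii) there is an ℕ-valued random variable τ with Σ_{n≥0} P(τ > n) < ∞ such that for every n, X_n = W_n almost surely on the event {τ ≤ n}; and (iii) E[φ(X_n)] → a as n → ∞ for some real a. Then for every k ≥ 0 the estimator φ(X_k) + Σ_{n=k+1}^{τ−1} (φ(X_n) − φ(W_n)) (the sum being empty when τ ≤ k+1) is integrable and has expectation a. -/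
/-!
After the meeting time the two chains agree, so the finite sum in the estimator is almost surely
the whole series `∑_{n > k} (φ(X_n) - φ(W_n))`. Its terms vanish off `{τ > n}`, so their `L¹` norms
are at most `2 C P(τ > n)`, which is summable: expectation and summation may be exchanged. Since
`X_{n-1}` and `W_n` have the same law, `E[φ(X_n) - φ(W_n)] = E φ(X_n) - E φ(X_{n-1})`, and the
series of expectations telescopes to `a - E φ(X_k)`.
-/

open MeasureTheory Filter Finset ProbabilityTheory

open scoped Topology

theorem sum_Ico_eq_tsum_of_eq_zero {M : Type*} [AddCommMonoid M] [TopologicalSpace M]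
    {g : ℕ → M} {j t : ℕ} (hg : ∀ n, t ≤ n → g n = 0) :
    ∑ n ∈ Ico j t, g n = ∑' m, g (j + m) := by
  rw [sum_Ico_eq_sum_range, tsum_eq_sum (s := range (t - j))]
  intro m hm
  exact hg _ (by simp only [mem_range, not_lt] at hm; omega)

theorem tsum_sub_eq_sub_of_tendsto {G : Type*} [AddCommGroup G] [TopologicalSpace G]
    [IsTopologicalAddGroup G] [T2Space G] {b : ℕ → G} {a : G}
    (hs : Summable fun n => b (n + 1) - b n) (hb : Tendsto b atTop (𝓝 a)) :
    ∑' n, (b (n + 1) - b n) = a - b 0 := by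
  refine tendsto_nhds_unique hs.hasSum.tendsto_sum_nat ?_
  simp_rw [sum_range_sub]
  exact hb.sub_const _

namespace MeasureTheory

variable {α E : Type*} [MeasurableSpace α] {μ : Measure α} [NormedAddCommGroup E]

theorem integral_norm_le_mul_measureReal_of_ae_eq_zero_off [IsFiniteMeasure μ] {F : α → E}
    {s : Set α} {C : ℝ} (hs : MeasurableSet s) (hF : AEStronglyMeasurable F μ)
    (hC : ∀ᵐ x ∂μ, ‖F x‖ ≤ C) (hzero : ∀ᵐ x ∂μ, x ∉ s → F x = 0) :
    ∫ x, ‖F x‖ ∂μ ≤ C * μ.real s := by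
  have hbound : ∀ᵐ x ∂μ, ‖F x‖ ≤ s.indicator (fun _ => C) x := by
    filter_upwards [hC, hzero] with x hxC hx0
    by_cases hx : x ∈ s
    · simpa [hx] using hxC
    · simp [hx, hx0 hx]
  calc ∫ x, ‖F x‖ ∂μ ≤ ∫ x, s.indicator (fun _ => C) x ∂μ :=
        integral_mono_ae (Integrable.of_bound hF C hC).norm
          ((integrable_const C).indicator hs) hbound
    _ = C * μ.real s := by rw [integral_indicator_const C hs, smul_eq_mul, mul_comm]

variable [CompleteSpace E]

theorem integrable_tsum_of_summable_integral_norm {ι : Type*} [Countable ι] {F : ι → α → E}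
    (hF : ∀ i, Integrable (F i) μ) (hsum : Summable fun i => ∫ x, ‖F i x‖ ∂μ) :
    Integrable (fun x => ∑' i, F i x) μ := by
  have hfinite : ∑' i, ‖(hF i).toL1 (F i)‖ₑ ≠ ⊤ := by
    simp_rw [Integrable.enorm_toL1, ← ofReal_integral_norm_eq_lintegral_enorm (hF _),
      ← ENNReal.ofReal_tsum_of_nonneg (fun i => integral_nonneg fun _ => norm_nonneg _) hsum]
    exact ENNReal.ofReal_ne_top
  refine (L1.integrable_coeFn _).congr ((Lp.coeFn_tsum hfinite).trans ?_)
  filter_upwards [ae_all_iff.2 fun i => (hF i).coeFn_toL1] with x hx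
  simp only [hx]

theorem integral_tsum_eq_sub_of_tendsto [NormedSpace ℝ E] {F : ℕ → α → E} {b : ℕ → E} {a : E}
    (hF : ∀ n, Integrable (F n) μ) (hsum : Summable fun n => ∫ x, ‖F n x‖ ∂μ)
    (hincrement : ∀ n, ∫ x, F n x ∂μ = b (n + 1) - b n) (hb : Tendsto b atTop (𝓝 a)) :
    ∫ x, ∑' n, F n x ∂μ = a - b 0 := by
  rw [← integral_tsum_of_summable_integral_norm hF hsum, tsum_congr hincrement]
  refine tsum_sub_eq_sub_of_tendsto ?_ hb
  exact hsum.of_norm_bounded fun n => hincrement n ▸ norm_integral_le_integral_norm _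

end MeasureTheory

section RandomElements

variable {Ω X : Type*} [MeasurableSpace Ω] [MeasurableSpace X] {P : Measure Ω} [IsFiniteMeasure P]
  {φ : X → ℝ} {C : ℝ}

theorem integrable_comp_of_abs_le (hφ : Measurable φ) (hC : ∀ x, |φ x| ≤ C) {Y : Ω → X}
    (hY : AEMeasurable Y P) : Integrable (fun ω => φ (Y ω)) P :=
  .of_bound (hφ.comp_aemeasurable hY).aestronglyMeasurable C (.of_forall fun ω => hC (Y ω))

theorem integral_norm_comp_sub_comp_le (hφ : Measurable φ) (hC : ∀ x, |φ x| ≤ C)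
    {Y Z : Ω → X} (hY : AEMeasurable Y P) (hZ : AEMeasurable Z P) {s : Set Ω}
    (hs : MeasurableSet s) (hYZ : ∀ᵐ ω ∂P, ω ∉ s → Y ω = Z ω) :
    ∫ ω, ‖φ (Y ω) - φ (Z ω)‖ ∂P ≤ 2 * C * P.real s :=
  integral_norm_le_mul_measureReal_of_ae_eq_zero_off hs
    ((integrable_comp_of_abs_le hφ hC hY).sub (integrable_comp_of_abs_le hφ hC hZ)).1
    (.of_forall fun ω => two_mul C ▸ (norm_sub_le _ _).trans (add_le_add (hC _) (hC _)))
    (hYZ.mono fun ω h hω => by rw [h hω, sub_self])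

theorem integral_comp_sub_comp_of_map_eq (hφ : Measurable φ) (hC : ∀ x, |φ x| ≤ C)
    {Y Z W : Ω → X} (hY : AEMeasurable Y P) (hZ : AEMeasurable Z P) (hW : AEMeasurable W P)
    (hYW : P.map Y = P.map W) :
    ∫ ω, (φ (Z ω) - φ (W ω)) ∂P = ∫ ω, φ (Z ω) ∂P - ∫ ω, φ (Y ω) ∂P := by
  rw [integral_sub (integrable_comp_of_abs_le hφ hC hZ) (integrable_comp_of_abs_le hφ hC hW)]
  exact congrArg (_ - ·) ((IdentDistrib.mk hY hW hYW).comp hφ).integral_eq.symm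

end RandomElements

/-- unbiasedness of the coupled MCMC estimator
`φ(X_k) + ∑_{n=k+1}^{τ−1} (φ(X_n) − φ(W_n))`: if `Law(X_n) = Law(W_{n+1})`,
the chains are faithful after the a.s. finite meeting time `τ` with summable
tails, and `E[φ(X_n)] → a`, then the estimator is integrable with mean `a`. -/
theorem coupled_mcmc_estimator_unbiased
    {Ω : Type*} [MeasurableSpace Ω] (P : Measure Ω) [IsProbabilityMeasure P]
    {X : Type*} [MeasurableSpace X]
    (φ : X → ℝ) (hφmeas : Measurable φ) (Cφ : ℝ) (hφbdd : ∀ x, |φ x| ≤ Cφ)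
    (Xs Ws : ℕ → Ω → X)
    (hXmeas : ∀ n, Measurable (Xs n)) (hWmeas : ∀ n, Measurable (Ws n))
    (hlaw : ∀ n : ℕ, Measure.map (Xs n) P = Measure.map (Ws (n + 1)) P)
    (τ : Ω → ℕ) (hτmeas : Measurable τ)
    (hτtail : Summable (fun n : ℕ => (P {ω | n < τ ω}).toReal))
    (hfaithful : ∀ n : ℕ, ∀ᵐ ω ∂P, τ ω ≤ n → Xs n ω = Ws n ω)
    (a : ℝ)
    (hconv : Tendsto (fun n => ∫ ω, φ (Xs n ω) ∂P) atTop (nhds a)) :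
    ∀ k : ℕ,
      Integrable (fun ω => φ (Xs k ω) +
        ∑ n ∈ Finset.Ico (k + 1) (τ ω), (φ (Xs n ω) - φ (Ws n ω))) P ∧
      ∫ ω, (φ (Xs k ω) +
        ∑ n ∈ Finset.Ico (k + 1) (τ ω), (φ (Xs n ω) - φ (Ws n ω))) ∂P = a := by
  intro k
  set D : ℕ → Ω → ℝ := fun n ω => φ (Xs n ω) - φ (Ws n ω)
  have hXint n := integrable_comp_of_abs_le hφmeas hφbdd (hXmeas n).aemeasurable (P := P)
  have hWint n := integrable_comp_of_abs_le hφmeas hφbdd (hWmeas n).aemeasurable (P := P)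
  have hDint n : Integrable (D n) P := (hXint n).sub (hWint n)
  have hsummable : Summable fun m => ∫ ω, ‖D (k + 1 + m) ω‖ ∂P :=
    .of_nonneg_of_le (fun _ => integral_nonneg fun _ => norm_nonneg _)
      (fun _ => integral_norm_comp_sub_comp_le hφmeas hφbdd (hXmeas _).aemeasurable
        (hWmeas _).aemeasurable (measurableSet_lt measurable_const hτmeas)
        ((hfaithful _).mono fun _ h hτ => h (not_lt.1 hτ)))
      ((hτtail.mul_left (2 * Cφ)).comp_injective (add_right_injective (k + 1)))
  have hincrement m : ∫ ω, D (k + 1 + m) ω ∂P =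
      ∫ ω, φ (Xs (k + m + 1) ω) ∂P - ∫ ω, φ (Xs (k + m) ω) ∂P := by
    rw [Nat.add_right_comm]
    exact integral_comp_sub_comp_of_map_eq hφmeas hφbdd (hXmeas _).aemeasurable
      (hXmeas _).aemeasurable (hWmeas _).aemeasurable (hlaw _)
  have hestimator : (fun ω => ∑ n ∈ Ico (k + 1) (τ ω), D n ω) =ᵐ[P]
      fun ω => ∑' m, D (k + 1 + m) ω := by
    filter_upwards [ae_all_iff.2 hfaithful] with ω hω
    exact sum_Ico_eq_tsum_of_eq_zero fun n hn => by simp [D, hω n hn]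
  have hint := (integrable_tsum_of_summable_integral_norm (fun _ => hDint _)
    hsummable).congr hestimator.symm
  refine ⟨(hXint k).add hint, ?_⟩
  rw [integral_add (hXint k) hint, integral_congr_ae hestimator,
    integral_tsum_eq_sub_of_tendsto (fun _ => hDint _) hsummable hincrement
      (hconv.comp ((tendsto_add_atTop_nat k).congr fun m => add_comm m k))]
  exact add_sub_cancel _ a
end

section
/- Let (ξ_l)_{l≥0} be a sequence of independent, integrable real-valued random variables on a probability space. Suppose there are real numbers (a_l)_{l≥0} and a real number a such that E[ξ_0] = a_0, E[ξ_l] = a_l − a_{l−1} for every l ≥ 1, and a_l → a as l → ∞, and suppose there exist constants C < ∞ and β > 0 such that E[ξ_l²] ≤ C · 2^{−2βl} and (a_l − a)² ≤ C · 2^{−2βl} for every l ≥ 0. Then there exists a probability mass function p on ℕ with p(l) > 0 for all l, with tail function P̄(l) = Σ_{k≥l} p(k), such that for any ℕ-valued random variable L with law p independent of (ξ_l), the independent-sum estimator Z := Σ_{l=0}^{L} ξ_l / P̄(l) is square-integrable with E[Z] = a; that is, Z is an unbiased, finite-variance estimator of a. -/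
/-!
Take `p` geometric with ratio `q = 2^(-β/2)`, so that the tail is `P̄(l) = q^l`, the square root
of the decay rate `2^(-βl)` of `‖ξ_l‖₂`. Writing the estimator as `∑_l 1_{L ≥ l} ξ_l / P̄(l)`, the
`l`-th term has `L²` norm at most `‖ξ_l‖₂ / q^l ≤ √C q^l`, so the series converges absolutely
in `L²`, hence in `L¹`, and may be integrated termwise. Independence of `L` and `ξ` gives
`E[1_{L ≥ l} ξ_l] = P̄(l) E[ξ_l]`, so the expectation is `∑_l E[ξ_l]`, which telescopes to
`lim a_l = a`.
-/

open MeasureTheory ProbabilityTheory Filter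
open scoped ENNReal

section SeriesInLp

variable {α E : Type*} [MeasurableSpace α] {μ : Measure α} [NormedAddCommGroup E]
  {f : ℕ → α → E}

theorem eLpNorm_tsum_le {p : ℝ≥0∞} (hp : 1 ≤ p) (hf : ∀ n, AEStronglyMeasurable (f n) μ)
    (hsum : ∀ᵐ x ∂μ, Summable (f · x)) :
    eLpNorm (fun x => ∑' n, f n x) p μ ≤ ∑' n, eLpNorm (f n) p μ := by
  refine Lp.eLpNorm_le_of_ae_tendsto (u := atTop) (f := fun N x => ∑ n ∈ Finset.range N, f n x)
    (Eventually.of_forall fun N => ?_) (fun N => ?_) ?_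
  · simp only [← Finset.sum_apply]
    exact (eLpNorm_sum_le (fun n _ => hf n) hp).trans (ENNReal.sum_le_tsum _)
  · simp only [← Finset.sum_apply]
    exact Finset.aestronglyMeasurable_sum _ fun n _ => hf n
  · filter_upwards [hsum] with x hx using hx.hasSum.tendsto_sum_nat

theorem memLp_tsum_of_tsum_eLpNorm_ne_top {p : ℝ≥0∞} (hp : 1 ≤ p)
    (hf : ∀ n, AEStronglyMeasurable (f n) μ) (hsum : ∀ᵐ x ∂μ, Summable (f · x))
    (h : ∑' n, eLpNorm (f n) p μ ≠ ∞) : MemLp (fun x => ∑' n, f n x) p μ := by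
  refine ⟨aestronglyMeasurable_of_tendsto_ae atTop
    (f := fun N x => ∑ n ∈ Finset.range N, f n x) (fun N => ?_) ?_,
    (eLpNorm_tsum_le hp hf hsum).trans_lt h.lt_top⟩
  · simp only [← Finset.sum_apply]
    exact Finset.aestronglyMeasurable_sum _ fun n _ => hf n
  · filter_upwards [hsum] with x hx using hx.hasSum.tendsto_sum_nat

theorem hasSum_integral_of_tsum_eLpNorm_one_ne_top [NormedSpace ℝ E]
    (hf : ∀ n, AEStronglyMeasurable (f n) μ) (h : ∑' n, eLpNorm (f n) 1 μ ≠ ∞) :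
    HasSum (fun n => ∫ x, f n x ∂μ) (∫ x, ∑' n, f n x ∂μ) := by
  refine hasSum_integral_of_summable_integral_norm
    (fun n => memLp_one_iff_integrable.1 ⟨hf n, ?_⟩) ?_
  · exact (ENNReal.le_tsum n).trans_lt h.lt_top
  · simp only [integral_norm_eq_lintegral_enorm (hf _), ← eLpNorm_one_eq_lintegral_enorm]
    exact ENNReal.summable_toReal h

end SeriesInLp

theorem eLpNorm_div_const {α 𝕜 : Type*} [MeasurableSpace α] {μ : Measure α} [NormedField 𝕜]
    {p : ℝ≥0∞} (f : α → 𝕜) {c : 𝕜} (hc : c ≠ 0) :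
    eLpNorm (fun x => f x / c) p μ = eLpNorm f p μ / ‖c‖ₑ := by
  simp_rw [div_eq_inv_mul, ENNReal.div_eq_inv_mul]
  rw [← enorm_inv hc]
  exact eLpNorm_const_smul c⁻¹ f p μ

theorem ProbabilityTheory.IndepFun.integral_indicator_preimage {Ω β : Type*} [MeasurableSpace Ω]
    [MeasurableSpace β] {μ : Measure Ω} {L : Ω → β} {X : Ω → ℝ} (hLX : IndepFun L X μ)
    (hL : Measurable L) {s : Set β} (hs : MeasurableSet s) (hX : AEStronglyMeasurable X μ) :
    ∫ ω, (L ⁻¹' s).indicator X ω ∂μ = μ.real (L ⁻¹' s) * ∫ ω, X ω ∂μ := by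
  have hind : (L ⁻¹' s).indicator X = (s.indicator 1 ∘ L) * X := by
    ext ω
    by_cases hω : L ω ∈ s <;> simp [Set.indicator, hω]
  have hindep : IndepFun (s.indicator (1 : β → ℝ) ∘ L) X μ :=
    hLX.comp (measurable_one.indicator hs) measurable_id
  rw [hind, hindep.integral_mul_eq_mul_integral
    ((measurable_one.indicator hs).comp hL).aestronglyMeasurable hX,
    show s.indicator 1 ∘ L = (L ⁻¹' s).indicator 1 from rfl, integral_indicator_one (hL hs)]

theorem measure_preimage_Ici_eq_ofReal_tsum {Ω : Type*} [MeasurableSpace Ω] {μ : Measure Ω}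
    {L : Ω → ℕ} (hL : Measurable L) {p : ℕ → ℝ} (hp : ∀ l, 0 ≤ p l) (hps : Summable p)
    (hlaw : ∀ l, μ {ω | L ω = l} = ENNReal.ofReal (p l)) (l : ℕ) :
    μ (L ⁻¹' Set.Ici l) = ENNReal.ofReal (∑' k, p (l + k)) := by
  have hunion : L ⁻¹' Set.Ici l = ⋃ k, {ω | L ω = l + k} := by
    ext ω
    simp only [Set.mem_preimage, Set.mem_Ici, Set.mem_iUnion, Set.mem_ofPred_eq]
    exact ⟨fun h => ⟨L ω - l, by omega⟩, fun ⟨k, hk⟩ => by omega⟩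
  have hdisj : Pairwise fun i j => Disjoint {ω | L ω = l + i} {ω | L ω = l + j} :=
    fun i j hij => Set.disjoint_left.2 fun ω hi hj => hij (by
      simp only [Set.mem_ofPred_eq] at hi hj; omega)
  rw [hunion, measure_iUnion hdisj fun k => measurableSet_eq_fun hL measurable_const,
    ENNReal.ofReal_tsum_of_nonneg (fun k => hp _) (hps.comp_injective (add_right_injective l))]
  simp only [hlaw]

theorem sum_range_succ_eq_tsum_indicator {Ω E : Type*} [AddCommMonoid E] [TopologicalSpace E]
    (L : Ω → ℕ) (f : ℕ → Ω → E) (ω : Ω) :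
    ∑ l ∈ Finset.range (L ω + 1), f l ω = ∑' l, (L ⁻¹' Set.Ici l).indicator (f l) ω := by
  rw [tsum_eq_sum (s := Finset.range (L ω + 1)) fun l hl => ?_]
  · refine Finset.sum_congr rfl fun l hl => ?_
    rw [Set.indicator_of_mem (by simp only [Finset.mem_range] at hl; simp; omega)]
  · rw [Set.indicator_of_notMem (by simp only [Finset.mem_range] at hl; simp; omega)]

theorem eLpNorm_two_le_of_integral_sq_le {α : Type*} [MeasurableSpace α] {μ : Measure α}
    {f : α → ℝ} (hf : MemLp f 2 μ) {M : ℝ} (hM : 0 ≤ M) (h : ∫ x, f x ^ 2 ∂μ ≤ M ^ 2) :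
    eLpNorm f 2 μ ≤ ENNReal.ofReal M := by
  rw [hf.eLpNorm_eq_integral_rpow_norm two_ne_zero ENNReal.ofNat_ne_top]
  refine ENNReal.ofReal_le_ofReal ?_
  simp only [ENNReal.toReal_ofNat, Real.rpow_two, Real.norm_eq_abs, sq_abs, ← one_div,
    ← Real.sqrt_eq_rpow]
  exact Real.sqrt_le_iff.2 ⟨hM, h⟩

theorem tsum_one_sub_mul_pow_add {q : ℝ} (hq0 : 0 ≤ q) (hq1 : q < 1) (l : ℕ) :
    ∑' k, (1 - q) * q ^ (l + k) = q ^ l := by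
  simp_rw [pow_add, ← mul_assoc, tsum_mul_left, tsum_geometric_of_lt_one hq0 hq1]
  field_simp [(sub_pos.2 hq1).ne']

theorem tsum_eLpNorm_div_pow_ne_top {α E : Type*} [MeasurableSpace α] {μ : Measure α}
    [NormedAddCommGroup E] {p : ℝ≥0∞} {f : ℕ → α → E} {c q : ℝ} (hc : 0 ≤ c) (hq0 : 0 < q)
    (hq1 : q < 1) (hf : ∀ l, eLpNorm (f l) p μ ≤ ENNReal.ofReal (c * q ^ l * q ^ l)) :
    ∑' l, eLpNorm (f l) p μ / ENNReal.ofReal (q ^ l) ≠ ∞ := by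
  refine ne_top_of_le_ne_top (b := ∑' l, ENNReal.ofReal (c * q ^ l)) ?_
    (ENNReal.tsum_le_tsum fun l => ENNReal.div_le_of_le_mul <|
      (hf l).trans_eq (ENNReal.ofReal_mul (by positivity)))
  rw [← ENNReal.ofReal_tsum_of_nonneg (fun l => by positivity)
    ((summable_geometric_of_lt_one hq0.le hq1).mul_left c)]
  exact ENNReal.ofReal_ne_top

theorem eq_of_hasSum_of_increments {G : Type*} [AddCommGroup G] [TopologicalSpace G]
    [IsTopologicalAddGroup G] [T2Space G] {m a : ℕ → G} {s t : G} (hs : HasSum m s)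
    (h0 : m 0 = a 0) (hinc : ∀ l, 1 ≤ l → m l = a l - a (l - 1))
    (ha : Tendsto a atTop (nhds t)) : s = t := by
  have hpartial : ∀ n, ∑ i ∈ Finset.range (n + 1), m i = a n := by
    intro n
    induction n with
    | zero => simp [h0]
    | succ n ih => rw [Finset.sum_range_succ, ih, hinc (n + 1) (by omega)]; simp
  refine tendsto_nhds_unique ((tendsto_add_atTop_iff_nat 1).2 hs.tendsto_sum_nat) ?_
  simpa only [hpartial] using ha

section IndependentSum

variable {Ω : Type*} [MeasurableSpace Ω] {L : Ω → ℕ} {p : ℕ → ℝ}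

theorem integral_indicator_preimage_Ici_div_tail {μ : Measure Ω} (hL : Measurable L)
    (hp : ∀ l, 0 ≤ p l) (hps : Summable p) (hlaw : ∀ l, μ {ω | L ω = l} = ENNReal.ofReal (p l))
    {X : Ω → ℝ} (hLX : IndepFun L X μ) (hX : AEStronglyMeasurable X μ) {l : ℕ}
    (hT : ∑' k, p (l + k) ≠ 0) :
    ∫ ω, (L ⁻¹' Set.Ici l).indicator (fun ω => X ω / ∑' k, p (l + k)) ω ∂μ = ∫ ω, X ω ∂μ := by
  have hLX' : IndepFun L (fun ω => X ω / ∑' k, p (l + k)) μ :=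
    hLX.comp measurable_id (measurable_id.div_const _)
  rw [hLX'.integral_indicator_preimage hL measurableSet_Ici (by fun_prop), measureReal_def,
    measure_preimage_Ici_eq_ofReal_tsum hL hp hps hlaw,
    ENNReal.toReal_ofReal (tsum_nonneg fun k => hp _), integral_div, mul_div_cancel₀ _ hT]

theorem memLp_independentSum_and_hasSum_integral {P : Measure Ω} [IsProbabilityMeasure P]
    {ξ : ℕ → Ω → ℝ} (hξ : ∀ l, AEStronglyMeasurable (ξ l) P) (hL : Measurable L)
    (hp : ∀ l, 0 < p l) (hps : Summable p) (hlaw : ∀ l, P {ω | L ω = l} = ENNReal.ofReal (p l))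
    (hindep : IndepFun L (fun ω l => ξ l ω) P)
    (hξ2 : ∑' l, eLpNorm (ξ l) 2 P / ENNReal.ofReal (∑' k, p (l + k)) ≠ ∞) :
    MemLp (fun ω => ∑ l ∈ Finset.range (L ω + 1), ξ l ω / ∑' k, p (l + k)) 2 P ∧
      HasSum (fun l => ∫ ω, ξ l ω ∂P)
        (∫ ω, ∑ l ∈ Finset.range (L ω + 1), ξ l ω / ∑' k, p (l + k) ∂P) := by
  have hT : ∀ l, 0 < ∑' k, p (l + k) := fun l =>
    (hps.comp_injective (add_right_injective l)).tsum_pos (fun k => (hp _).le) 0 (hp _)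
  set g : ℕ → Ω → ℝ := fun l => (L ⁻¹' Set.Ici l).indicator fun ω => ξ l ω / ∑' k, p (l + k)
  have hZ : (fun ω => ∑ l ∈ Finset.range (L ω + 1), ξ l ω / ∑' k, p (l + k))
      = fun ω => ∑' l, g l ω :=
    funext (sum_range_succ_eq_tsum_indicator L fun l ω => ξ l ω / ∑' k, p (l + k))
  have hg : ∀ l, AEStronglyMeasurable (g l) P := fun l =>
    AEStronglyMeasurable.indicator (by fun_prop) (hL measurableSet_Ici)
  have hg_summable : ∀ ω, Summable (g · ω) := fun ω =>
    summable_of_ne_finset_zero (s := Finset.range (L ω + 1)) fun l hl =>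
      Set.indicator_of_notMem (by simp only [Finset.mem_range] at hl; simp; omega) _
  have hg2 : ∑' l, eLpNorm (g l) 2 P ≠ ∞ := by
    refine ne_top_of_le_ne_top hξ2 (ENNReal.tsum_le_tsum fun l => ?_)
    rw [← Real.enorm_of_nonneg (hT l).le, ← eLpNorm_div_const _ (hT l).ne']
    exact eLpNorm_indicator_le _
  have hg1 : ∑' l, eLpNorm (g l) 1 P ≠ ∞ := ne_top_of_le_ne_top hg2 <|
    ENNReal.tsum_le_tsum fun l => eLpNorm_le_eLpNorm_of_exponent_le one_le_two (hg l)
  have hmean : ∀ l, ∫ ω, g l ω ∂P = ∫ ω, ξ l ω ∂P := fun l =>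
    integral_indicator_preimage_Ici_div_tail hL (fun l => (hp l).le) hps hlaw
      (hindep.comp measurable_id (measurable_pi_apply l)) (hξ l) (hT l).ne'
  rw [hZ]
  refine ⟨memLp_tsum_of_tsum_eLpNorm_ne_top one_le_two hg
    (Eventually.of_forall hg_summable) hg2, ?_⟩
  simpa only [hmean] using hasSum_integral_of_tsum_eLpNorm_one_ne_top hg hg1

end IndependentSum

theorem exists_pmf_independent_sum_estimator_unbiased_general
    {Ω : Type*} [MeasurableSpace Ω] (P : Measure Ω) [IsProbabilityMeasure P]
    (ξ : ℕ → Ω → ℝ)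
    (a : ℕ → ℝ) (alim : ℝ)
    (ha0 : ∫ ω, ξ 0 ω ∂P = a 0)
    (hainc : ∀ l : ℕ, 1 ≤ l → ∫ ω, ξ l ω ∂P = a l - a (l - 1))
    (halim : Tendsto a atTop (nhds alim))
    (hξ2 : ∀ l, MemLp (ξ l) 2 P)
    (C β : ℝ) (hβ : 0 < β)
    (hmom : ∀ l : ℕ, ∫ ω, (ξ l ω) ^ 2 ∂P ≤ C * ((2 : ℝ) ^ (-(2 * β * l)))) :
    ∃ p : ℕ → ℝ, (∀ l, 0 < p l) ∧ (∑' l, p l = 1) ∧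
      ∀ L : Ω → ℕ, Measurable L →
        (∀ l, P {ω | L ω = l} = ENNReal.ofReal (p l)) →
        IndepFun L (fun ω => fun l => ξ l ω) P →
        MemLp
          (fun ω => ∑ l ∈ Finset.range (L ω + 1), ξ l ω / ∑' k : ℕ, p (l + k))
          2 P ∧
        ∫ ω, (∑ l ∈ Finset.range (L ω + 1), ξ l ω / ∑' k : ℕ, p (l + k)) ∂P
          = alim := by
  have hC : 0 ≤ C := (integral_nonneg fun ω => sq_nonneg (ξ 0 ω)).trans (by simpa using hmom 0)
  set q : ℝ := (2 : ℝ) ^ (-(β / 2)) with hq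
  have hq0 : 0 < q := by positivity
  have hq1 : q < 1 := Real.rpow_lt_one_of_one_lt_of_neg one_lt_two (by linarith)
  have hrate : ∀ l : ℕ, (2 : ℝ) ^ (-(2 * β * l)) = (q ^ l * q ^ l) ^ 2 := fun l => by
    rw [← pow_add, ← pow_mul, hq, ← Real.rpow_natCast, ← Real.rpow_mul zero_le_two]
    push_cast; ring_nf
  have hξL2 : ∀ l, eLpNorm (ξ l) 2 P ≤ ENNReal.ofReal (√C * q ^ l * q ^ l) := fun l =>
    eLpNorm_two_le_of_integral_sq_le (hξ2 l) (by positivity) <| by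
      rw [mul_assoc, mul_pow, Real.sq_sqrt hC, ← hrate]; exact hmom l
  have hp : ∀ l, 0 < (1 - q) * q ^ l := fun l => mul_pos (sub_pos.2 hq1) (pow_pos hq0 l)
  refine ⟨fun l => (1 - q) * q ^ l, hp,
    by simpa using tsum_one_sub_mul_pow_add hq0.le hq1 0, fun L hL hlaw hindep => ?_⟩
  obtain ⟨hZ, hmean⟩ := memLp_independentSum_and_hasSum_integral (fun l => (hξ2 l).1) hL hp
    ((summable_geometric_of_lt_one hq0.le hq1).mul_left _) hlaw hindep
    (by simpa only [tsum_one_sub_mul_pow_add hq0.le hq1] using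
      tsum_eLpNorm_div_pow_ne_top (Real.sqrt_nonneg C) hq0 hq1 hξL2)
  exact ⟨hZ, eq_of_hasSum_of_increments hmean ha0 hainc halim⟩

/-- corollary, independent-sum form: if the independent
increment estimators `ξ_l` are unbiased for the increments `a_l − a_{l−1}` with
`a_l → a`, and second moments and squared biases decay geometrically,
`E[ξ_l²] ≤ C 2^{−2βl}` and `(a_l − a)² ≤ C 2^{−2βl}`, then there is a positive
probability mass function `p` on ℕ with tail function `P̄(l) = ∑_{k≥l} p(k)`
such that for every `L ∼ p` independent of `(ξ_l)` the independent-sum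
estimator `∑_{l=0}^L ξ_l / P̄(l)` is square-integrable and unbiased for `a`. -/
theorem exists_pmf_independent_sum_estimator_unbiased
    {Ω : Type*} [MeasurableSpace Ω] (P : Measure Ω) [IsProbabilityMeasure P]
    (ξ : ℕ → Ω → ℝ) (hξmeas : ∀ l, Measurable (ξ l))
    (hξint : ∀ l, Integrable (ξ l) P)
    (hξindep : iIndepFun ξ P)
    (a : ℕ → ℝ) (alim : ℝ)
    (ha0 : ∫ ω, ξ 0 ω ∂P = a 0)
    (hainc : ∀ l : ℕ, 1 ≤ l → ∫ ω, ξ l ω ∂P = a l - a (l - 1))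
    (halim : Tendsto a atTop (nhds alim))
    (hξ2 : ∀ l, MemLp (ξ l) 2 P)
    (C β : ℝ) (hβ : 0 < β)
    (hmom : ∀ l : ℕ, ∫ ω, (ξ l ω) ^ 2 ∂P ≤ C * ((2 : ℝ) ^ (-(2 * β * l))))
    (hbias : ∀ l : ℕ, (a l - alim) ^ 2 ≤ C * ((2 : ℝ) ^ (-(2 * β * l)))) :
    ∃ p : ℕ → ℝ, (∀ l, 0 < p l) ∧ (∑' l, p l = 1) ∧
      ∀ L : Ω → ℕ, Measurable L →
        (∀ l, P {ω | L ω = l} = ENNReal.ofReal (p l)) →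
        IndepFun L (fun ω => fun l => ξ l ω) P →
        MemLp
          (fun ω => ∑ l ∈ Finset.range (L ω + 1), ξ l ω / ∑' k : ℕ, p (l + k))
          2 P ∧
        ∫ ω, (∑ l ∈ Finset.range (L ω + 1), ξ l ω / ∑' k : ℕ, p (l + k)) ∂P
          = alim :=
  exists_pmf_independent_sum_estimator_unbiased_general P ξ a alim ha0 hainc halim hξ2 C β hβ hmom
end
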